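/- arXiv:2006.12047 — 8 statements merged into one kernel-verified Lean document; each statement's English description precedes it below -/
import Mathlib

section
/- For every trace t, if t satisfies the security property then apv(t) is empty; conversely (assuming r is reflexive and corruption sets are finite), if apv(t) is empty then t satisfies the security property. In other words, apv(t) = ∅ if and only if sat t. -/
/-! By reflexivity `cor t` is a violating corruption set when `t` fails `sat`, and since `⊂` is
well founded on finsets some violating reachable trace has a `⊂`-minimal one, which lies in `apv t`. -/

theorem stmt1 {T P : Type*} (sat : T → Prop) (cor : T → Finset P)
    (r : T → T → Prop) (hrefl : ∀ t, r t t)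
    (apv : T → Set (Finset P))
    (happv : ∀ t, apv t = {S | ¬ sat t ∧ (∃ t', r t t' ∧ cor t' = S ∧ ¬ sat t') ∧
      ¬ ∃ t'', r t t'' ∧ cor t'' ⊂ S ∧ ¬ sat t''})
    (t : T) : apv t = ∅ ↔ sat t := by
  rw [happv]
  constructor
  · intro hempty
    by_contra hunsat
    obtain ⟨t', hmin⟩ := exists_minimalFor_of_wellFoundedLT (fun t' ↦ r t t' ∧ ¬ sat t') cor
      ⟨t, hrefl t, hunsat⟩
    refine hempty.subset ⟨hunsat, ⟨t', hmin.prop.1, rfl, hmin.prop.2⟩, ?_⟩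
    rintro ⟨t'', hreach, hssub, hunsat''⟩
    exact hmin.not_lt ⟨hreach, hunsat''⟩ hssub
  · intro hsat
    ext S
    simp [hsat]
end

section
/- Let r be a transitive counterfactual relation. If r t t' holds and S' ∈ apv(t'), then either apv(t) is empty, or there exists S ∈ apv(t) with S ⊆ S'. -/
/-!
The set `apv t` consists of the inclusion-minimal elements of the family of corrupted sets of
violating traces reachable from `t` (provided `t` itself violates). By transitivity this family
for `t` contains the one for `t'`, so `S' ∈ apv t'` lies in the family for `t`; as finsets are
well-founded under `⊂`, some minimal element of that family lies below `S'`.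
-/

section Violations

variable {T P : Type*} (sat : T → Prop) (cor : T → Finset P) (r : T → T → Prop)

def violatingCor (t : T) : Set (Finset P) :=
  {S | ∃ t', r t t' ∧ cor t' = S ∧ ¬ sat t'}

variable {sat cor r}

lemma violatingCor_subset_of_rel (htrans : ∀ a b c, r a b → r b c → r a c) {t t' : T}
    (hr : r t t') : violatingCor sat cor r t' ⊆ violatingCor sat cor r t := by
  rintro S ⟨u, hru, hcu, hsu⟩
  exact ⟨u, htrans _ _ _ hr hru, hcu, hsu⟩

lemma minimal_mem_violatingCor_iff {t : T} {S : Finset P} :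
    Minimal (· ∈ violatingCor sat cor r t) S ↔
      (∃ t', r t t' ∧ cor t' = S ∧ ¬ sat t') ∧ ¬ ∃ t'', r t t'' ∧ cor t'' ⊂ S ∧ ¬ sat t'' := by
  simp only [minimal_iff_forall_lt, violatingCor, Set.mem_ofPred_eq]
  constructor
  · rintro ⟨hS, hmin⟩
    exact ⟨hS, fun ⟨u, hru, hsub, hsu⟩ ↦ hmin hsub ⟨u, hru, rfl, hsu⟩⟩
  · rintro ⟨hS, hmin⟩
    exact ⟨hS, fun S'' hsub ⟨u, hru, hcu, hsu⟩ ↦ hmin ⟨u, hru, hcu ▸ hsub, hsu⟩⟩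

end Violations

theorem stmt3 {T P : Type*} (sat : T → Prop) (cor : T → Finset P)
    (r : T → T → Prop) (htrans : ∀ a b c, r a b → r b c → r a c)
    (apv : T → Set (Finset P))
    (happv : ∀ t, apv t = {S | ¬ sat t ∧ (∃ t', r t t' ∧ cor t' = S ∧ ¬ sat t') ∧
      ¬ ∃ t'', r t t'' ∧ cor t'' ⊂ S ∧ ¬ sat t''})
    (t t' : T) (S' : Finset P) (hr : r t t') (hS' : S' ∈ apv t') :
    apv t = ∅ ∨ ∃ S ∈ apv t, S ⊆ S' := by
  have hmem : ∀ u S, S ∈ apv u ↔ ¬ sat u ∧ Minimal (· ∈ violatingCor sat cor r u) S := by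
    intro u S
    rw [happv, Set.mem_ofPred_eq, minimal_mem_violatingCor_iff]
  by_cases hsat : sat t
  · left
    ext S
    simp [hmem, hsat]
  · right
    have hS't : S' ∈ violatingCor sat cor r t :=
      violatingCor_subset_of_rel htrans hr ((hmem t' S').1 hS').2.prop
    obtain ⟨S, hSS', hmin⟩ := exists_minimal_le_of_wellFoundedLT _ S' hS't
    exact ⟨S, (hmem t S).2 ⟨hsat, hmin⟩, hSS'⟩
end

section
/- (Soundness of the axiomatic characterization.) Suppose the verdict function vf satisfies: Verifiability (vf t = ∅ ↔ sat t), Minimality (S ∈ vf t → ¬∃ S' ∈ vf t, S' ⊊ S), Sufficiency (S ∈ vf t → ∃ t', vf t' = {S} ∧ cor t' ⊆ S ∧ r t t'), Uniqueness (S ∈ vf t → S ⊆ cor t), and Completeness (if there exists t' with vf t' = {S}, cor t' ⊆ S, r t t', and no S' ∈ vf t with S' ⊊ S, and S ⊆ cor t, and ¬ sat t, then S ∈ vf t). Assume r is reflexive and transitive and satisfies r t t' → cor t' ⊆ cor t. Then for every trace t, vf t = apv t. -/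
/-!
Sufficiency and uniqueness realise every verdict of `t` as the corrupted set of a violating
trace reachable from `t`. Conversely, every violating trace `t'` reachable from a violating `t`
bounds some verdict of `t` from above: take a verdict `S'` of `t'`; either a verdict of `t` lies
strictly below `S'`, or completeness puts `S'` itself into `vf t`. Hence `vf t` consists exactly
of the minimal corrupted sets of violating traces reachable from `t`, which is `apv t`.
-/

namespace VerdictFunction

variable {T P : Type*} {sat : T → Prop} {cor : T → Finset P} {r : T → T → Prop}
  {vf : T → Set (Finset P)}

theorem not_sat_of_mem (hVer : ∀ t, vf t = ∅ ↔ sat t) {t : T} {S : Finset P}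
    (hS : S ∈ vf t) : ¬ sat t := fun h => ((hVer t).mpr h ▸ hS : S ∈ (∅ : Set (Finset P)))

theorem nonempty_of_not_sat (hVer : ∀ t, vf t = ∅ ↔ sat t) {t : T} (ht : ¬ sat t) :
    (vf t).Nonempty :=
  Set.nonempty_iff_ne_empty.mpr (mt (hVer t).mp ht)

theorem exists_reachable_cor_eq (hVer : ∀ t, vf t = ∅ ↔ sat t)
    (hSuff : ∀ t S, S ∈ vf t → ∃ t', vf t' = {S} ∧ cor t' ⊆ S ∧ r t t')
    (hUniq : ∀ t S, S ∈ vf t → S ⊆ cor t) {t : T} {S : Finset P} (hS : S ∈ vf t) :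
    ∃ t', r t t' ∧ cor t' = S ∧ ¬ sat t' := by
  obtain ⟨t', hvf, hcor, hr⟩ := hSuff t S hS
  have hS' : S ∈ vf t' := hvf ▸ rfl
  exact ⟨t', hr, hcor.antisymm (hUniq t' S hS'), not_sat_of_mem hVer hS'⟩

theorem exists_mem_subset_cor_of_reachable (hVer : ∀ t, vf t = ∅ ↔ sat t)
    (hSuff : ∀ t S, S ∈ vf t → ∃ t', vf t' = {S} ∧ cor t' ⊆ S ∧ r t t')
    (hUniq : ∀ t S, S ∈ vf t → S ⊆ cor t)
    (hComp : ∀ t S, (∃ t', vf t' = {S} ∧ cor t' ⊆ S ∧ r t t') →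
      (¬ ∃ S' ∈ vf t, S' ⊂ S) → S ⊆ cor t → ¬ sat t → S ∈ vf t)
    (htrans : ∀ a b c, r a b → r b c → r a c)
    (hcor : ∀ t t', r t t' → cor t' ⊆ cor t)
    {t t' : T} (ht : ¬ sat t) (hr : r t t') (ht' : ¬ sat t') :
    ∃ S ∈ vf t, S ⊆ cor t' := by
  obtain ⟨S', hS'⟩ := nonempty_of_not_sat hVer ht'
  obtain ⟨t'', hvf, hcor'', hr'⟩ := hSuff t' S' hS'
  have hrt : r t t'' := htrans _ _ _ hr hr'
  by_cases hmin : ∃ S ∈ vf t, S ⊂ S'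
  · obtain ⟨S, hS, hlt⟩ := hmin
    exact ⟨S, hS, hlt.subset.trans (hUniq t' S' hS')⟩
  · have hS'cor : S' ⊆ cor t := (hUniq t'' S' (hvf ▸ rfl)).trans (hcor t t'' hrt)
    exact ⟨S', hComp t S' ⟨t'', hvf, hcor'', hrt⟩ hmin hS'cor ht, hUniq t' S' hS'⟩

end VerdictFunction

open VerdictFunction in
theorem stmt4_general {T P : Type*} (sat : T → Prop) (cor : T → Finset P)
    (r : T → T → Prop)
    (htrans : ∀ a b c, r a b → r b c → r a c)
    (hcor : ∀ t t', r t t' → cor t' ⊆ cor t)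
    (vf : T → Set (Finset P))
    (apv : T → Set (Finset P))
    (happv : ∀ t, apv t = {S | ¬ sat t ∧ (∃ t', r t t' ∧ cor t' = S ∧ ¬ sat t') ∧
      ¬ ∃ t'', r t t'' ∧ cor t'' ⊂ S ∧ ¬ sat t''})
    (hVer : ∀ t, vf t = ∅ ↔ sat t)
    (hMin : ∀ t S, S ∈ vf t → ¬ ∃ S' ∈ vf t, S' ⊂ S)
    (hSuff : ∀ t S, S ∈ vf t → ∃ t', vf t' = {S} ∧ cor t' ⊆ S ∧ r t t')
    (hUniq : ∀ t S, S ∈ vf t → S ⊆ cor t)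
    (hComp : ∀ t S, (∃ t', vf t' = {S} ∧ cor t' ⊆ S ∧ r t t') →
      (¬ ∃ S' ∈ vf t, S' ⊂ S) → S ⊆ cor t → ¬ sat t → S ∈ vf t) :
    ∀ t, vf t = apv t := by
  intro t
  ext S
  rw [happv, Set.mem_ofPred_eq]
  have bounded : ∀ {t'}, ¬ sat t → r t t' → ¬ sat t' → ∃ S ∈ vf t, S ⊆ cor t' :=
    exists_mem_subset_cor_of_reachable hVer hSuff hUniq hComp htrans hcor
  constructor
  · intro hS
    have ht := not_sat_of_mem hVer hS
    refine ⟨ht, exists_reachable_cor_eq hVer hSuff hUniq hS, ?_⟩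
    rintro ⟨t'', hr, hlt, ht''⟩
    obtain ⟨S', hS', hsub⟩ := bounded ht hr ht''
    exact hMin t S hS ⟨S', hS', hsub.trans_ssubset hlt⟩
  · rintro ⟨ht, ⟨t', hr, rfl, ht'⟩, hmin⟩
    obtain ⟨S, hS, hsub⟩ := bounded ht hr ht'
    obtain ⟨t₂, hr₂, rfl, ht₂⟩ := exists_reachable_cor_eq hVer hSuff hUniq hS
    have heq : cor t₂ = cor t' := hsub.eq_of_not_ssubset fun hlt => hmin ⟨t₂, hr₂, hlt, ht₂⟩
    exact heq ▸ hS

theorem stmt4 {T P : Type*} (sat : T → Prop) (cor : T → Finset P)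
    (r : T → T → Prop) (hrefl : ∀ t, r t t)
    (htrans : ∀ a b c, r a b → r b c → r a c)
    (hcor : ∀ t t', r t t' → cor t' ⊆ cor t)
    (vf : T → Set (Finset P))
    (apv : T → Set (Finset P))
    (happv : ∀ t, apv t = {S | ¬ sat t ∧ (∃ t', r t t' ∧ cor t' = S ∧ ¬ sat t') ∧
      ¬ ∃ t'', r t t'' ∧ cor t'' ⊂ S ∧ ¬ sat t''})
    (hVer : ∀ t, vf t = ∅ ↔ sat t)
    (hMin : ∀ t S, S ∈ vf t → ¬ ∃ S' ∈ vf t, S' ⊂ S)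
    (hSuff : ∀ t S, S ∈ vf t → ∃ t', vf t' = {S} ∧ cor t' ⊆ S ∧ r t t')
    (hUniq : ∀ t S, S ∈ vf t → S ⊆ cor t)
    (hComp : ∀ t S, (∃ t', vf t' = {S} ∧ cor t' ⊆ S ∧ r t t') →
      (¬ ∃ S' ∈ vf t, S' ⊂ S) → S ⊆ cor t → ¬ sat t → S ∈ vf t) :
    ∀ t, vf t = apv t :=
  stmt4_general sat cor r htrans hcor vf apv happv hVer hMin hSuff hUniq hComp
end

section
/- (Completeness: Sufficiency.) Suppose vf t = apv t for all traces t, where r is reflexive, transitive, and satisfies r t t' → cor t' ⊆ cor t. Then for every t and every S ∈ vf t, there exists a trace t' with vf t' = {S}, cor t' ⊆ S, and r t t'. -/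
/-!
A corruption set `S` is admissible at `t` when some unsatisfied extension of `t` has corruption
exactly `S` and no unsatisfied extension has strictly smaller corruption. Pick an unsatisfied
extension `t₁` of `t` with `cor t₁ = S`. Its own extensions are extensions of `t`, and their
corruption sets lie inside `S`; minimality of `S` at `t` therefore forces every admissible set at
`t₁` to be `S`, while `t₁` itself witnesses that `S` is admissible there.
-/

section MinCorSets

variable {T P : Type*} (sat : T → Prop) (cor : T → Finset P) (r : T → T → Prop)

def minCorSets (t : T) : Set (Finset P) :=
  {S | ¬ sat t ∧ (∃ t', r t t' ∧ cor t' = S ∧ ¬ sat t') ∧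
    ¬ ∃ t'', r t t'' ∧ cor t'' ⊂ S ∧ ¬ sat t''}

variable {sat cor r}

theorem mem_minCorSets_of_rel (hrefl : ∀ t, r t t) (htrans : ∀ a b c, r a b → r b c → r a c)
    {t t₁ : T} {S : Finset P} (hS : S ∈ minCorSets sat cor r t)
    (hr : r t t₁) (hc : cor t₁ = S) (hsat : ¬ sat t₁) :
    S ∈ minCorSets sat cor r t₁ := by
  obtain ⟨-, -, hmin⟩ := hS
  exact ⟨hsat, ⟨t₁, hrefl t₁, hc, hsat⟩,
    fun ⟨t₂, hr₂, hlt, hsat₂⟩ => hmin ⟨t₂, htrans _ _ _ hr hr₂, hlt, hsat₂⟩⟩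

theorem eq_of_mem_minCorSets_of_rel (htrans : ∀ a b c, r a b → r b c → r a c)
    (hcor : ∀ t t', r t t' → cor t' ⊆ cor t)
    {t t₁ : T} {S S' : Finset P} (hS : S ∈ minCorSets sat cor r t)
    (hr : r t t₁) (hc : cor t₁ = S) (hS' : S' ∈ minCorSets sat cor r t₁) :
    S' = S := by
  obtain ⟨-, -, hmin⟩ := hS
  obtain ⟨-, ⟨t₂, hr₂, rfl, hsat₂⟩, -⟩ := hS'
  have hle : cor t₂ ⊆ S := hc ▸ hcor _ _ hr₂
  by_contra hne
  exact hmin ⟨t₂, htrans _ _ _ hr hr₂, hle.ssubset_of_ne hne, hsat₂⟩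

theorem minCorSets_eq_singleton (hrefl : ∀ t, r t t) (htrans : ∀ a b c, r a b → r b c → r a c)
    (hcor : ∀ t t', r t t' → cor t' ⊆ cor t)
    {t t₁ : T} {S : Finset P} (hS : S ∈ minCorSets sat cor r t)
    (hr : r t t₁) (hc : cor t₁ = S) (hsat : ¬ sat t₁) :
    minCorSets sat cor r t₁ = {S} :=
  Set.eq_singleton_iff_unique_mem.mpr
    ⟨mem_minCorSets_of_rel hrefl htrans hS hr hc hsat,
      fun _ hS' => eq_of_mem_minCorSets_of_rel htrans hcor hS hr hc hS'⟩

end MinCorSets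

theorem stmt8 {T P : Type*} (sat : T → Prop) (cor : T → Finset P)
    (r : T → T → Prop) (hrefl : ∀ t, r t t)
    (htrans : ∀ a b c, r a b → r b c → r a c)
    (hcor : ∀ t t', r t t' → cor t' ⊆ cor t)
    (vf : T → Set (Finset P))
    (apv : T → Set (Finset P))
    (happv : ∀ t, apv t = {S | ¬ sat t ∧ (∃ t', r t t' ∧ cor t' = S ∧ ¬ sat t') ∧
      ¬ ∃ t'', r t t'' ∧ cor t'' ⊂ S ∧ ¬ sat t''})
    (heq : ∀ t, vf t = apv t) :
    ∀ t S, S ∈ vf t → ∃ t', vf t' = {S} ∧ cor t' ⊆ S ∧ r t t' := by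
  obtain rfl : vf = minCorSets sat cor r := funext fun t => (heq t).trans (happv t)
  intro t S hS
  have ⟨_, ⟨t₁, hr, hc, hsat⟩, _⟩ := hS
  exact ⟨t₁, minCorSets_eq_singleton hrefl htrans hcor hS hr hc hsat, hc.le, hr⟩
end

section
/- (Completeness condition follows from VerNE and relation elimination.) Assume: (VerNE) whenever some case test matches a trace, the security property is violated; (RelE) if r t t' and both t and t' violate the security property then ctr(t') ⊆ ctr(t). Then the Completeness verification condition holds: for any trace t and party-set S, if there exists t' with vf t' = {S}, cor t' ⊆ S, and r t t', and no S' ∈ vf t with S' ⊊ S, and S ⊆ cor t, and t violates the security property, then S ∈ vf t. -/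
/-! A verdict `S ∈ vf t'` is witnessed by a case test `(i, ρ)` matching `t'`. By VerNE, `t'` then
violates the property, so relation elimination moves `(i, ρ)` into `ctr t`, and the same test
witnesses `S ∈ vf t`. -/

section RelationElimination

variable {T I R : Type*} {sat : T → Prop} {r : T → T → Prop} {matchesP : I → R → T → Prop}
  {ctr : T → Set (I × R)}

theorem matchesP_of_rel (hctr : ∀ t, ctr t = {p : I × R | matchesP p.1 p.2 t})
    (hVerNE : ∀ t (i : I) (ρ : R), matchesP i ρ t → ¬ sat t)
    (hRelE : ∀ t t', r t t' → ¬ sat t → ¬ sat t' → ctr t' ⊆ ctr t)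
    {t t' : T} (hr : r t t') (ht : ¬ sat t) {i : I} {ρ : R} (hm : matchesP i ρ t') :
    matchesP i ρ t := by
  have hmem : (i, ρ) ∈ ctr t' := by rw [hctr]; exact hm
  simpa [hctr] using hRelE t t' hr ht (hVerNE t' i ρ hm) hmem

theorem vf_subset_of_rel {P : Type*} {blame : I → R → Finset P} {vf : T → Set (Finset P)}
    (hctr : ∀ t, ctr t = {p : I × R | matchesP p.1 p.2 t})
    (hvf : ∀ t, vf t = {S : Finset P | ∃ i ρ, matchesP i ρ t ∧ blame i ρ = S})
    (hVerNE : ∀ t (i : I) (ρ : R), matchesP i ρ t → ¬ sat t)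
    (hRelE : ∀ t t', r t t' → ¬ sat t → ¬ sat t' → ctr t' ⊆ ctr t)
    {t t' : T} (hr : r t t') (ht : ¬ sat t) :
    vf t' ⊆ vf t := by
  rw [hvf, hvf]
  rintro S ⟨i, ρ, hm, rfl⟩
  exact ⟨i, ρ, matchesP_of_rel hctr hVerNE hRelE hr ht hm, rfl⟩

end RelationElimination

theorem stmt11_general {T P I R : Type*}
    (sat : T → Prop) (cor : T → Finset P) (r : T → T → Prop)
    (matchesP : I → R → T → Prop) (blame : I → R → Finset P)
    (ctr : T → Set (I × R))
    (hctr : ∀ t, ctr t = {p : I × R | matchesP p.1 p.2 t})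
    (vf : T → Set (Finset P))
    (hvf : ∀ t, vf t = {S : Finset P | ∃ i ρ, matchesP i ρ t ∧ blame i ρ = S})
    (hVerNE : ∀ t (i : I) (ρ : R), matchesP i ρ t → ¬ sat t)
    (hRelE : ∀ t t', r t t' → ¬ sat t → ¬ sat t' → ctr t' ⊆ ctr t) :
    ∀ t S, (∃ t', vf t' = {S} ∧ cor t' ⊆ S ∧ r t t') →
      (¬ ∃ S' ∈ vf t, S' ⊂ S) → S ⊆ cor t → ¬ sat t → S ∈ vf t := by
  rintro t S ⟨t', hvft', -, hr⟩ - - ht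
  have hS : S ∈ vf t' := by rw [hvft']; rfl
  exact vf_subset_of_rel hctr hvf hVerNE hRelE hr ht hS

theorem stmt11 {T P I R : Type*} [Finite I]
    (sat : T → Prop) (cor : T → Finset P) (r : T → T → Prop)
    (matchesP : I → R → T → Prop) (blame : I → R → Finset P)
    (ctr : T → Set (I × R))
    (hctr : ∀ t, ctr t = {p : I × R | matchesP p.1 p.2 t})
    (vf : T → Set (Finset P))
    (hvf : ∀ t, vf t = {S : Finset P | ∃ i ρ, matchesP i ρ t ∧ blame i ρ = S})
    (hVerNE : ∀ t (i : I) (ρ : R), matchesP i ρ t → ¬ sat t)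
    (hRelE : ∀ t t', r t t' → ¬ sat t → ¬ sat t' → ctr t' ⊆ ctr t) :
    ∀ t S, (∃ t', vf t' = {S} ∧ cor t' ⊆ S ∧ r t t') →
      (¬ ∃ S' ∈ vf t, S' ⊂ S) → S ⊆ cor t → ¬ sat t → S ∈ vf t :=
  stmt11_general sat cor r matchesP blame ctr hctr vf hvf hVerNE hRelE
end

section
/- (Sufficiency soundness via case tests.) Assume: (SuffTP) for each case-test index i there exists a trace t' and instantiation ρ' with ctr(t') = {(i, ρ')} and cor(t') ⊆ blame(i, ρ'); (RepP) for every trace t, instantiation ρ with matches i ρ t, and every single-matched trace t' with ctr(t') = {(i, ρ')}, there exists a trace t'' with ctr(t'') = {(i, ρ)} and cor(t'') ⊆ blame(i, ρ) whenever cor(t') ⊆ blame(i, ρ'); (UniqTP) whenever matches i ρ t, blame(i, ρ) ⊆ cor(t); (RelI) if matches i ρ t and ctr(t') = {(i, ρ)} and cor(t') = blame(i, ρ) ⊆ cor(t), then r t t'. Then the Sufficiency verification condition holds: for all t and S ∈ vf t there exists t' with vf t' = {S}, cor t' ⊆ S, and r t t'. -/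
/-! SuffTP and RepP turn a match `(i, ρ)` of `t` into a trace `t'` whose only match is `(i, ρ)`
and with `cor t' ⊆ blame i ρ`; UniqTP upgrades this to `cor t' = blame i ρ`, which is exactly what
RelI needs for `r t t'`, while `vf t' = {blame i ρ}` because `(i, ρ)` is the only match of `t'`. -/

section CaseTests

variable {T I R α : Type*} (matchesP : I → R → T → Prop)

lemma matches_of_setOf_matches_eq_singleton {t : T} {i : I} {ρ : R}
    (h : {p : I × R | matchesP p.1 p.2 t} = {(i, ρ)}) : matchesP i ρ t :=
  show (i, ρ) ∈ {p : I × R | matchesP p.1 p.2 t} from h ▸ rfl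

lemma setOf_exists_matches_eq_image (f : I → R → α) (t : T) :
    {a | ∃ i ρ, matchesP i ρ t ∧ f i ρ = a} =
      Function.uncurry f '' {p : I × R | matchesP p.1 p.2 t} := by
  ext a
  simp [Prod.exists]

end CaseTests

theorem stmt12_general {T P I R : Type*}
    (cor : T → Finset P) (r : T → T → Prop)
    (matchesP : I → R → T → Prop) (blame : I → R → Finset P)
    (ctr : T → Set (I × R))
    (hctr : ∀ t, ctr t = {p : I × R | matchesP p.1 p.2 t})
    (vf : T → Set (Finset P))
    (hvf : ∀ t, vf t = {S : Finset P | ∃ i ρ, matchesP i ρ t ∧ blame i ρ = S})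
    (hSuffTP : ∀ i : I, ∃ (t' : T) (ρ' : R), ctr t' = {(i, ρ')} ∧ cor t' ⊆ blame i ρ')
    (hRepP : ∀ (i : I) (ρ : R) (t t' : T) (ρ' : R), matchesP i ρ t →
      ctr t' = {(i, ρ')} → cor t' ⊆ blame i ρ' →
      ∃ t'', ctr t'' = {(i, ρ)} ∧ cor t'' ⊆ blame i ρ)
    (hUniqTP : ∀ (i : I) (ρ : R) (t : T), matchesP i ρ t → blame i ρ ⊆ cor t)
    (hRelI : ∀ (i : I) (ρ : R) (t t' : T), matchesP i ρ t → ctr t' = {(i, ρ)} →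
      cor t' = blame i ρ → blame i ρ ⊆ cor t → r t t') :
    ∀ t S, S ∈ vf t → ∃ t', vf t' = {S} ∧ cor t' ⊆ S ∧ r t t' := by
  intro t S hS
  rw [hvf] at hS
  obtain ⟨i, ρ, hm, rfl⟩ := hS
  obtain ⟨t₀, ρ₀, hctr₀, hcor₀⟩ := hSuffTP i
  obtain ⟨t', hctr', hcor'⟩ := hRepP i ρ t t₀ ρ₀ hm hctr₀ hcor₀
  have hm' : matchesP i ρ t' := matches_of_setOf_matches_eq_singleton matchesP (hctr t' ▸ hctr')
  have hcor_eq : cor t' = blame i ρ := hcor'.antisymm (hUniqTP i ρ t' hm')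
  refine ⟨t', ?_, hcor', hRelI i ρ t t' hm hctr' hcor_eq (hUniqTP i ρ t hm)⟩
  rw [hvf, setOf_exists_matches_eq_image, ← hctr, hctr', Set.image_singleton]
  rfl

theorem stmt12 {T P I R : Type*} [Finite I]
    (cor : T → Finset P) (r : T → T → Prop)
    (matchesP : I → R → T → Prop) (blame : I → R → Finset P)
    (ctr : T → Set (I × R))
    (hctr : ∀ t, ctr t = {p : I × R | matchesP p.1 p.2 t})
    (vf : T → Set (Finset P))
    (hvf : ∀ t, vf t = {S : Finset P | ∃ i ρ, matchesP i ρ t ∧ blame i ρ = S})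
    (hSuffTP : ∀ i : I, ∃ (t' : T) (ρ' : R), ctr t' = {(i, ρ')} ∧ cor t' ⊆ blame i ρ')
    (hRepP : ∀ (i : I) (ρ : R) (t t' : T) (ρ' : R), matchesP i ρ t →
      ctr t' = {(i, ρ')} → cor t' ⊆ blame i ρ' →
      ∃ t'', ctr t'' = {(i, ρ)} ∧ cor t'' ⊆ blame i ρ)
    (hUniqTP : ∀ (i : I) (ρ : R) (t : T), matchesP i ρ t → blame i ρ ⊆ cor t)
    (hRelI : ∀ (i : I) (ρ : R) (t t' : T), matchesP i ρ t → ctr t' = {(i, ρ)} →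
      cor t' = blame i ρ → blame i ρ ⊆ cor t → r t t') :
    ∀ t S, S ∈ vf t → ∃ t', vf t' = {S} ∧ cor t' ⊆ S ∧ r t t' :=
  stmt12_general cor r matchesP blame ctr hctr vf hvf hSuffTP hRepP hUniqTP hRelI
end

section
/- (Sufficiency completeness.) Assume: (SinM) for each case-test index i there exists a single-matched trace t with ctr(t) = {(i, ρ)} for some ρ; (Suff) for all t and S ∈ vf t there exists t' with vf t' = {S}, cor t' ⊆ S, and r t t'; (Ver) vf t = ∅ ↔ sat t for all t; (RelE) r t t' with ¬sat t and ¬sat t' implies ctr(t') ⊆ ctr(t); and blame is injective in the sense that blame i ρ = blame j ρ' with (j,ρ') ∈ ctr(t') implies, for single-matched t' with vf t' = {blame i ρ}, that ctr(t') = {(i, ρ)} when ctr(t') ⊆ {(i, ρ)} and ctr t' nonempty. Then for each index i there exists a trace t' and ρ with ctr(t') = {(i, ρ)} and cor(t') ⊆ blame(i, ρ). -/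
/-!
Take the single-matched trace `t` for `i`, with `ctr t = {(i, ρ)}`. Its verdict set contains
`blame i ρ`, so `t` violates the property, and sufficiency yields `t'` with `vf t' = {blame i ρ}`,
`cor t' ⊆ blame i ρ` and `r t t'`. As `vf t'` is nonempty, `t'` violates the property too, so
relational evidence gives `ctr t' ⊆ {(i, ρ)}`, and `ctr t'` is nonempty; injectivity of blame
then forces `ctr t' = {(i, ρ)}`.
-/

section Verdicts

variable {T P I R : Type*} {matchesP : I → R → T → Prop} {blame : I → R → Finset P}
  {ctr : T → Set (I × R)} {vf : T → Set (Finset P)}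

theorem vf_eq_image_ctr (hctr : ∀ t, ctr t = {p : I × R | matchesP p.1 p.2 t})
    (hvf : ∀ t, vf t = {S : Finset P | ∃ i ρ, matchesP i ρ t ∧ blame i ρ = S}) (t : T) :
    vf t = Function.uncurry blame '' ctr t := by
  ext S
  simp [hvf, hctr]

theorem not_sat_iff_vf_nonempty {sat : T → Prop} (hVer : ∀ t, vf t = ∅ ↔ sat t) (t : T) :
    ¬ sat t ↔ (vf t).Nonempty := by
  rw [← hVer, Set.nonempty_iff_ne_empty]

end Verdicts

theorem stmt13_general {T P I R : Type*}
    (sat : T → Prop) (cor : T → Finset P) (r : T → T → Prop)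
    (matchesP : I → R → T → Prop) (blame : I → R → Finset P)
    (ctr : T → Set (I × R))
    (hctr : ∀ t, ctr t = {p : I × R | matchesP p.1 p.2 t})
    (vf : T → Set (Finset P))
    (hvf : ∀ t, vf t = {S : Finset P | ∃ i ρ, matchesP i ρ t ∧ blame i ρ = S})
    (hSinM : ∀ i : I, ∃ (t : T) (ρ : R), ctr t = {(i, ρ)})
    (hSuff : ∀ t S, S ∈ vf t → ∃ t', vf t' = {S} ∧ cor t' ⊆ S ∧ r t t')
    (hVer : ∀ t, vf t = ∅ ↔ sat t)
    (hRelE : ∀ t t', r t t' → ¬ sat t → ¬ sat t' → ctr t' ⊆ ctr t)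
    (hinj : ∀ (i : I) (ρ : R) (t' : T), vf t' = {blame i ρ} →
      ctr t' ⊆ {(i, ρ)} → (ctr t').Nonempty → ctr t' = {(i, ρ)}) :
    ∀ i : I, ∃ (t' : T) (ρ : R), ctr t' = {(i, ρ)} ∧ cor t' ⊆ blame i ρ := by
  have hvf_ctr := vf_eq_image_ctr hctr hvf
  intro i
  obtain ⟨t, ρ, ht⟩ := hSinM i
  have hblame : blame i ρ ∈ vf t := by
    rw [hvf_ctr, ht, Set.image_singleton]
    rfl
  obtain ⟨t', hvft', hcor, hr⟩ := hSuff t _ hblame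
  have hviol : ¬ sat t := (not_sat_iff_vf_nonempty hVer t).2 ⟨_, hblame⟩
  have hvf'_ne : (vf t').Nonempty := hvft' ▸ Set.singleton_nonempty _
  have hviol' : ¬ sat t' := (not_sat_iff_vf_nonempty hVer t').2 hvf'_ne
  have hsub : ctr t' ⊆ {(i, ρ)} := ht ▸ hRelE t t' hr hviol hviol'
  have hne : (ctr t').Nonempty := Set.image_nonempty.1 (hvf_ctr t' ▸ hvf'_ne)
  exact ⟨t', ρ, hinj i ρ t' hvft' hsub hne, hcor⟩

theorem stmt13 {T P I R : Type*} [Finite I]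
    (sat : T → Prop) (cor : T → Finset P) (r : T → T → Prop)
    (matchesP : I → R → T → Prop) (blame : I → R → Finset P)
    (ctr : T → Set (I × R))
    (hctr : ∀ t, ctr t = {p : I × R | matchesP p.1 p.2 t})
    (vf : T → Set (Finset P))
    (hvf : ∀ t, vf t = {S : Finset P | ∃ i ρ, matchesP i ρ t ∧ blame i ρ = S})
    (hSinM : ∀ i : I, ∃ (t : T) (ρ : R), ctr t = {(i, ρ)})
    (hSuff : ∀ t S, S ∈ vf t → ∃ t', vf t' = {S} ∧ cor t' ⊆ S ∧ r t t')
    (hVer : ∀ t, vf t = ∅ ↔ sat t)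
    (hRelE : ∀ t t', r t t' → ¬ sat t → ¬ sat t' → ctr t' ⊆ ctr t)
    (hinj : ∀ (i : I) (ρ : R) (t' : T), vf t' = {blame i ρ} →
      ctr t' ⊆ {(i, ρ)} → (ctr t').Nonempty → ctr t' = {(i, ρ)}) :
    ∀ i : I, ∃ (t' : T) (ρ : R), ctr t' = {(i, ρ)} ∧ cor t' ⊆ blame i ρ :=
  stmt13_general sat cor r matchesP blame ctr hctr vf hvf hSinM hSuff hVer hRelE hinj
end

section
/- (Singleton verdict under uniqueness and minimality of apv.) Let r be reflexive, transitive, and corruption-monotone. Suppose S ∈ apv(t) and t' is a trace with r t t', ¬ sat t', and cor(t') = S. Then apv(t') = {S}. -/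
theorem stmt18 {T P : Type*} (sat : T → Prop) (cor : T → Finset P)
    (r : T → T → Prop) (hrefl : ∀ t, r t t)
    (htrans : ∀ a b c, r a b → r b c → r a c)
    (hcor : ∀ t t', r t t' → cor t' ⊆ cor t)
    (apv : T → Set (Finset P))
    (happv : ∀ t, apv t = {S | ¬ sat t ∧ (∃ t', r t t' ∧ cor t' = S ∧ ¬ sat t') ∧
      ¬ ∃ t'', r t t'' ∧ cor t'' ⊂ S ∧ ¬ sat t''})
    (t t' : T) (S : Finset P)
    (hS : S ∈ apv t) (hr : r t t') (hv : ¬ sat t') (hc : cor t' = S) :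
    apv t' = {S} := by
  rw [happv] at hS ⊢
  obtain ⟨hns, _, hmin⟩ := hS
  ext S''
  simp only [Set.mem_setOf_eq, Set.mem_singleton_iff]
  constructor
  · rintro ⟨-, ⟨t'', hr'', hc'', hv''⟩, -⟩
    have hsub : S'' ⊆ S := hc'' ▸ hc ▸ hcor _ _ hr''
    by_contra hne
    exact hmin ⟨t'', htrans _ _ _ hr hr'', hc'' ▸ lt_of_le_of_ne hsub (hc'' ▸ hne), hv''⟩
  · rintro rfl
    refine ⟨hv, ⟨t', hrefl t', hc, hv⟩, ?_⟩
    rintro ⟨t'', hr'', hlt, hv''⟩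
    exact hmin ⟨t'', htrans _ _ _ hr hr'', hlt, hv''⟩
end
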